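/- For the signed random heap process with m ≥ 4 columns, consider a heap whose highest piece in column 0 is blocked by exactly one piece, lying in column 1, and mark that blocking piece. Let P̃ be the probability that the marked piece is annihilated before any piece falls in column 0, and let Ẽ be the expected number of steps until either the marked piece is annihilated or a piece falls in column 0. Then Ẽ = (1 − P̃)·m. -/

import Mathlib

open MeasureTheory ProbabilityTheory Filter
open scoped ENNReal

namespace RandomHeap

/-- A piece of a signed heap: a height (a positive integer), a column in `ZMod m`,
and a sign (`true` for `+`, `false` for `-`). -/
structure Piece (m : ℕ) where
  height : ℕ
  col : ZMod m
  sign : Bool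
deriving DecidableEq

variable {m : ℕ}

instance : MeasurableSpace (ZMod m) := ⊤
instance : MeasurableSpace (Piece m) := ⊤
instance : MeasurableSpace (Finset (Piece m)) := ⊤

/-- The defining conditions for a finite set of pieces to be a signed heap. -/
def IsHeap (H : Finset (Piece m)) : Prop :=
  (∀ p ∈ H, 1 ≤ p.height) ∧
  (∀ p ∈ H, 1 < p.height →
      ∃ q ∈ H, q.height + 1 = p.height ∧
        (q.col = p.col - 1 ∨ q.col = p.col ∨ q.col = p.col + 1)) ∧
  (∀ p ∈ H, ∀ q ∈ H, p.height = q.height + 1 → p.col = q.col → p.sign = q.sign) ∧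
  (∀ p ∈ H, ∀ q ∈ H, q.col = p.col + 1 → p.height ≠ q.height) ∧
  (∀ p ∈ H, ∀ q ∈ H, p.height = q.height → p.col = q.col → p = q)

/-- The height of the highest piece in column `j` (0 if the column is empty). -/
def colHeight (H : Finset (Piece m)) (j : ZMod m) : ℕ :=
  (H.filter fun p => p.col = j).sup Piece.height

/-- The roof of a heap: the set of removable pieces, i.e. pieces having no piece of
greater height in their own column or either adjacent column. -/
def roof (H : Finset (Piece m)) : Finset (Piece m) :=
  H.filter fun p => ∀ q ∈ H,
    (q.col = p.col - 1 ∨ q.col = p.col ∨ q.col = p.col + 1) → q.height ≤ p.height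

open scoped Classical in
/-- One step of the signed random heap dynamics: given the draw `d = (k, s)`, if the top
piece of column `k` is strictly higher than both neighbouring columns and has sign `!s`,
it is annihilated; otherwise the piece `(max (h_{k-1}, h_k, h_{k+1}) + 1, k, s)` is added. -/
noncomputable def step (H : Finset (Piece m)) (d : ZMod m × Bool) : Finset (Piece m) :=
  if max (colHeight H (d.1 - 1)) (colHeight H (d.1 + 1)) < colHeight H d.1 ∧
      (⟨colHeight H d.1, d.1, !d.2⟩ : Piece m) ∈ H then
    H.erase ⟨colHeight H d.1, d.1, !d.2⟩
  else
    insert ⟨max (colHeight H d.1) (max (colHeight H (d.1 - 1)) (colHeight H (d.1 + 1))) + 1,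
      d.1, d.2⟩ H

/-- The heap process started from `H₀` and driven by the sequence of draws `ω`. -/
noncomputable def walk (H₀ : Finset (Piece m)) (ω : ℕ → ZMod m × Bool) : ℕ → Finset (Piece m)
  | 0 => H₀
  | n + 1 => step (walk H₀ ω n) (ω n)

/-- The roof of `H` contains a piece in column `0`. -/
def hasRoofPiece0 (H : Finset (Piece m)) : Prop := ∃ p ∈ roof H, p.col = 0

/-- The draws `U` form an i.i.d. sequence, uniform over the `2 * m` possible
(column, sign) pairs. -/
def IIDUniformDraws {Ω : Type*} [MeasurableSpace Ω] (P : Measure Ω)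
    (U : ℕ → Ω → ZMod m × Bool) : Prop :=
  (∀ n, Measurable (U n)) ∧
  iIndepFun U P ∧
  ∀ n d, P {ω | U n ω = d} = ((2 * m : ℕ) : ℝ≥0∞)⁻¹

end RandomHeap

open RandomHeap

namespace RandomHeap

variable {m : ℕ}

/-- The configuration in which the highest piece of column `0` is blocked by exactly one
piece `y`: column `0` is nonempty, `y` is strictly higher than the top of column `0`,
every piece of columns `-1, 0, 1` strictly higher than the top of column `0` is `y`
itself, and `y` is unblocked (it belongs to the roof). -/
def SingleBlocker (H : Finset (Piece m)) (y : Piece m) : Prop :=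
  (∃ p ∈ H, p.col = 0) ∧ y ∈ H ∧
  colHeight H 0 < y.height ∧
  (∀ p ∈ H, (p.col = -1 ∨ p.col = 0 ∨ p.col = 1) → colHeight H 0 < p.height → p = y) ∧
  y ∈ roof H

end RandomHeap

/-!
Let `A n` be the event that the process has not stopped during its first `n` steps. It depends
only on the first `n` draws, so the next draw is independent of it and falls in column `0` with
probability `1 / m`; hence
`P (A n) = P (A (n + 1)) + P (y is annihilated at step n + 1) + P (A n) / m`.
Summing over `n` telescopes to `1 = P̃ + Ẽ / m`, since `Ẽ = ∑ P (A n)` and `P (A n) → 0`.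
-/

open Finset Topology

lemma summable_and_mul_tsum_eq_of_eq_add {a b : ℕ → ℝ} {c : ℝ} (hc : 0 < c)
    (ha : ∀ n, 0 ≤ a n) (hb : ∀ n, 0 ≤ b n) (hab : ∀ n, a n = b n + a (n + 1) + c * a n) :
    Summable a ∧ c * ∑' n, a n = a 0 - ∑' n, b n := by
  have telescope : ∀ N, c * ∑ n ∈ range N, a n = a 0 - ∑ n ∈ range N, b n - a N := by
    intro N
    induction N with
    | zero => simp
    | succ N ih => rw [sum_range_succ, sum_range_succ]; linarith [hab N]
  have hb_le : ∀ N, ∑ n ∈ range N, b n ≤ a 0 := fun N => by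
    nlinarith [telescope N, ha N, sum_nonneg fun n (_ : n ∈ range N) => ha n]
  have ha_le : ∀ N, ∑ n ∈ range N, a n ≤ a 0 / c := fun N => by
    rw [le_div_iff₀ hc]
    nlinarith [telescope N, ha N, sum_nonneg fun n (_ : n ∈ range N) => hb n]
  have hsa := summable_of_sum_range_le ha ha_le
  have hsb := summable_of_sum_range_le hb hb_le
  refine ⟨hsa, tendsto_nhds_unique (hsa.hasSum.tendsto_sum_nat.const_mul c) ?_⟩
  simp_rw [telescope]
  simpa using (tendsto_const_nhds.sub hsb.hasSum.tendsto_sum_nat).sub hsa.tendsto_atTop_zero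

lemma setOf_forall_lt_notMem_eq_Iic {S : Set ℕ} (hS : S.Nonempty) :
    {n | ∀ j < n, j ∉ S} = Set.Iic (sInf S) := by
  ext n
  refine ⟨fun h => ?_, fun h j hj => Nat.notMem_of_lt_sInf (hj.trans_le h)⟩
  by_contra hlt
  exact h _ (not_le.1 hlt) (Nat.sInf_mem hS)

lemma tsum_indicator_Iic_one (k : ℕ) :
    ∑' n, (Set.Iic k).indicator (1 : ℕ → ℝ≥0∞) n = ((1 + k : ℕ) : ℝ≥0∞) := by
  rw [← _root_.tsum_subtype, Pi.one_def, ENNReal.tsum_set_one]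
  simp [Set.encard_eq_coe_toFinset_card, add_comm]

namespace RandomHeap

variable {m : ℕ} (H : Finset (Piece m)) (y : Piece m) (ω : ℕ → ZMod m × Bool)

def StopsAt (n : ℕ) : Prop := y ∉ walk H ω (n + 1) ∨ (ω n).1 = 0

def Survives (n : ℕ) : Prop := ∀ j < n, ¬ StopsAt H y ω j

def AnnihilatedAt (n : ℕ) : Prop :=
  Survives H y ω n ∧ y ∉ walk H ω (n + 1) ∧ (ω n).1 ≠ 0

lemma survives_zero : Survives H y ω 0 := fun _ h => absurd h (Nat.not_lt_zero _)

lemma survives_succ_iff (n : ℕ) :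
    Survives H y ω (n + 1) ↔ Survives H y ω n ∧ ¬ StopsAt H y ω n :=
  Nat.forall_lt_succ_right

lemma survives_iff_or (n : ℕ) :
    Survives H y ω n ↔
      (AnnihilatedAt H y ω n ∨ Survives H y ω (n + 1)) ∨
        (Survives H y ω n ∧ (ω n).1 = 0) := by
  rw [survives_succ_iff, AnnihilatedAt, StopsAt]
  tauto

lemma Survives.not_annihilatedAt_of_succ {n : ℕ} (h : Survives H y ω (n + 1)) :
    ¬ AnnihilatedAt H y ω n := fun ha => h n n.lt_succ_self (Or.inl ha.2.1)

lemma Survives.draw_ne_zero_of_succ {n : ℕ} (h : Survives H y ω (n + 1)) : (ω n).1 ≠ 0 :=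
  fun h0 => h n n.lt_succ_self (Or.inr h0)

lemma AnnihilatedAt.not_annihilatedAt_of_lt {a b : ℕ} (ha : AnnihilatedAt H y ω a)
    (hab : a < b) : ¬ AnnihilatedAt H y ω b := fun hb => hb.1 a hab (Or.inl ha.2.1)

lemma exists_annihilatedAt_iff (hy : y ∈ H) :
    (∃ n, y ∉ walk H ω n ∧ ∀ t < n, (ω t).1 ≠ 0) ↔ ∃ n, AnnihilatedAt H y ω n := by
  classical
  constructor
  · rintro ⟨N, hyN, hN⟩
    have hex : ∃ k, y ∉ walk H ω k := ⟨N, hyN⟩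
    have hfind_ne : Nat.find hex ≠ 0 := fun h0 => Nat.find_spec hex (h0 ▸ hy)
    obtain ⟨n, hn⟩ := Nat.exists_eq_add_one_of_ne_zero hfind_ne
    have hle : n + 1 ≤ N := hn ▸ Nat.find_min' hex hyN
    refine ⟨n, fun j hj => ?_, hn ▸ Nat.find_spec hex, hN n (by omega)⟩
    rintro (hj' | hj')
    · exact Nat.find_min hex (by omega) hj'
    · exact hN j (by omega) hj'
  · rintro ⟨n, hsurv, hyn, hn⟩
    refine ⟨n + 1, hyn, fun t ht => ?_⟩
    rcases Nat.lt_succ_iff_lt_or_eq.1 ht with ht | rfl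
    · exact fun h0 => hsurv t ht (Or.inr h0)
    · exact hn

section Measurability

variable {Ω : Type*} (U : ℕ → Ω → ZMod m × Bool)

abbrev drawsBefore (n : ℕ) : MeasurableSpace Ω :=
  ⨆ i < n, MeasurableSpace.comap (U i) inferInstance

lemma drawsBefore_mono {n n' : ℕ} (h : n ≤ n') : drawsBefore U n ≤ drawsBefore U n' :=
  biSup_mono fun _ hi => hi.trans_le h

lemma drawsBefore_le [MeasurableSpace Ω] (hU : ∀ i, Measurable (U i)) (n : ℕ) :
    drawsBefore U n ≤ ‹_› :=
  iSup₂_le fun i _ => (hU i).comap_le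

lemma measurable_draw_drawsBefore {i n : ℕ} (h : i < n) : Measurable[drawsBefore U n] (U i) :=
  (comap_measurable (U i)).mono
    (le_iSup₂ (f := fun j (_ : j < n) => MeasurableSpace.comap (U j) inferInstance) i h) le_rfl

lemma measurableSet_draw_fst_eq {j n : ℕ} (h : j < n) (k : ZMod m) :
    MeasurableSet[drawsBefore U n] {ω | (U j ω).1 = k} :=
  (measurable_draw_drawsBefore U h).fst (measurableSet_singleton k)

variable [NeZero m]

lemma measurable_walk_drawsBefore (n : ℕ) :
    Measurable[drawsBefore U n] fun ω => walk H (fun i => U i ω) n := by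
  induction n with
  | zero => exact measurable_const
  | succ n ih =>
    have hstep : Measurable fun p : Finset (Piece m) × (ZMod m × Bool) => step p.1 p.2 :=
      measurable_from_prod_countable_left fun _ => .of_discrete
    have hpair : Measurable[drawsBefore U (n + 1)]
        fun ω => (walk H (fun i => U i ω) n, U n ω) :=
      (ih.mono (drawsBefore_mono U n.le_succ) le_rfl).prodMk
        (measurable_draw_drawsBefore U n.lt_succ_self)
    have hcomp := hstep.comp hpair
    simp only [walk]
    exact hcomp

lemma measurableSet_notMem_walk (n : ℕ) :
    MeasurableSet[drawsBefore U n] {ω | y ∉ walk H (fun i => U i ω) n} :=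
  (measurable_walk_drawsBefore H U n (MeasurableSet.of_discrete (s := {W | y ∈ W}))).compl

lemma measurableSet_stopsAt {j n : ℕ} (h : j < n) :
    MeasurableSet[drawsBefore U n] {ω | StopsAt H y (fun i => U i ω) j} :=
  (drawsBefore_mono U h _ (measurableSet_notMem_walk H y U (j + 1))).union
    (measurableSet_draw_fst_eq U h 0)

lemma measurableSet_survives (n : ℕ) :
    MeasurableSet[drawsBefore U n] {ω | Survives H y (fun i => U i ω) n} := by
  simp only [Survives, Set.ofPred_forall]
  exact .iInter fun j => .iInter fun hj => (measurableSet_stopsAt H y U hj).compl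

lemma measurableSet_annihilatedAt (n : ℕ) :
    MeasurableSet[drawsBefore U (n + 1)] {ω | AnnihilatedAt H y (fun i => U i ω) n} :=
  (drawsBefore_mono U n.le_succ _ (measurableSet_survives H y U n)).inter
    ((measurableSet_notMem_walk H y U (n + 1)).inter
      (measurableSet_draw_fst_eq U n.lt_succ_self 0).compl)

end Measurability

section Probability

variable {Ω : Type*} [MeasurableSpace Ω] {P : Measure Ω} {U : ℕ → Ω → ZMod m × Bool}

lemma IIDUniformDraws.ne_zero [IsFiniteMeasure P] (hU : IIDUniformDraws P U) : m ≠ 0 := by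
  rintro rfl
  have h := hU.2.2 0 (0, true)
  simp only [mul_zero, Nat.cast_zero, ENNReal.inv_zero] at h
  exact measure_ne_top P _ h

lemma IIDUniformDraws.measureReal_col_eq [IsFiniteMeasure P] [NeZero m]
    (hU : IIDUniformDraws P U) (n : ℕ) (k : ZMod m) :
    P.real {ω | (U n ω).1 = k} = (m : ℝ)⁻¹ := by
  have hsplit :
      {ω | (U n ω).1 = k} = {ω | U n ω = (k, false)} ∪ {ω | U n ω = (k, true)} := by
    ext ω
    simp only [Set.mem_ofPred_eq, Set.mem_union]
    generalize U n ω = d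
    obtain ⟨a, _ | _⟩ := d <;> simp
  have hd : ∀ d, P.real {ω | U n ω = d} = ((2 * m : ℕ) : ℝ)⁻¹ := fun d => by
    simp [measureReal_def, hU.2.2 n d]
  rw [hsplit, measureReal_union, hd, hd]
  · push_cast; field_simp; norm_num
  · exact Set.disjoint_left.2 fun ω h1 h2 => by simp_all
  · exact hU.1 n (measurableSet_singleton _)

section Measurable

variable [NeZero m] (hU : ∀ i, Measurable (U i))
include hU

lemma measureReal_exists_notMem_walk_eq_tsum [IsFiniteMeasure P] (hy : y ∈ H) :
    P.real {ω | ∃ n, y ∉ walk H (fun i => U i ω) n ∧ ∀ t < n, (U t ω).1 ≠ 0}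
      = ∑' n, P.real {ω | AnnihilatedAt H y (fun i => U i ω) n} := by
  have hset : {ω | ∃ n, y ∉ walk H (fun i => U i ω) n ∧ ∀ t < n, (U t ω).1 ≠ 0}
      = ⋃ n, {ω | AnnihilatedAt H y (fun i => U i ω) n} := by
    ext ω
    simpa using exists_annihilatedAt_iff H y _ hy
  have hdisj : Pairwise
      (Function.onFun Disjoint fun n => {ω | AnnihilatedAt H y (fun i => U i ω) n}) :=
    (pairwise_disjoint_on _).2 fun a b hab =>
      Set.disjoint_left.2 fun _ ha => ha.not_annihilatedAt_of_lt H y _ hab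
  rw [hset, measureReal_def, measure_iUnion hdisj
    fun n => drawsBefore_le U hU _ _ (measurableSet_annihilatedAt H y U n),
    ENNReal.tsum_toReal_eq fun _ => measure_ne_top _ _]
  rfl

lemma integral_one_add_sInf_stopsAt_eq_tsum [IsFiniteMeasure P]
    (h0 : Tendsto (fun n => P.real {ω | Survives H y (fun i => U i ω) n}) atTop (𝓝 0)) :
    ∫ ω, ((1 + sInf {n | StopsAt H y (fun i => U i ω) n} : ℕ) : ℝ) ∂P
      = ∑' n, P.real {ω | Survives H y (fun i => U i ω) n} := by
  set A := fun n => {ω | Survives H y (fun i => U i ω) n}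
  have hA : ∀ n, MeasurableSet (A n) := fun n =>
    drawsBefore_le U hU n _ (measurableSet_survives H y U n)
  -- `sInf ∅ = 0`, so the integrand is the stopping time only where the process does stop.
  have hstops : ∀ᵐ ω ∂P, {n | StopsAt H y (fun i => U i ω) n}.Nonempty := by
    rw [ae_iff]
    refine measure_mono_null (t := ⋂ n, A n) (fun ω hω => ?_) ?_
    · exact Set.mem_iInter.2 fun n j _ hj => hω ⟨j, hj⟩
    · refine (measureReal_eq_zero_iff).1 (le_antisymm ?_ measureReal_nonneg)
      exact ge_of_tendsto' h0 fun n => measureReal_mono (Set.iInter_subset _ n)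
  have hcount : ∀ᵐ ω ∂P, ∑' n, (A n).indicator (1 : Ω → ℝ≥0∞) ω
      = ((1 + sInf {n | StopsAt H y (fun i => U i ω) n} : ℕ) : ℝ≥0∞) :=
    hstops.mono fun ω hω => by
      rw [← tsum_indicator_Iic_one, ← setOf_forall_lt_notMem_eq_Iic hω]
      rfl
  have hmeas : AEMeasurable (fun ω => ∑' n, (A n).indicator (1 : Ω → ℝ≥0∞) ω) P :=
    (Measurable.tsum fun n => measurable_one.indicator (hA n)).aemeasurable
  calc ∫ ω, ((1 + sInf {n | StopsAt H y (fun i => U i ω) n} : ℕ) : ℝ) ∂P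
      = ∫ ω, (∑' n, (A n).indicator (1 : Ω → ℝ≥0∞) ω).toReal ∂P :=
        integral_congr_ae <| hcount.mono fun ω h => by
          dsimp only
          rw [h, ENNReal.toReal_natCast]
    _ = (∫⁻ ω, ∑' n, (A n).indicator (1 : Ω → ℝ≥0∞) ω ∂P).toReal :=
        integral_toReal hmeas (hcount.mono fun ω h => h ▸ ENNReal.natCast_lt_top _)
    _ = ∑' n, P.real (A n) := by
        rw [lintegral_tsum fun n => (measurable_one.indicator (hA n)).aemeasurable,
          ENNReal.tsum_toReal_eq fun n => by simp [lintegral_indicator_one (hA n)]]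
        simp [lintegral_indicator_one (hA _), measureReal_def]

end Measurable

lemma IIDUniformDraws.indep_drawsBefore (hU : IIDUniformDraws P U) (n : ℕ) :
    Indep (drawsBefore U n) (MeasurableSpace.comap (U n) inferInstance) P := by
  have h := indep_iSup_of_disjoint (fun i => (hU.1 i).comap_le) hU.2.1.iIndep
    (S := Set.Iio n) (T := {n}) (by simp)
  simpa using h

variable [IsFiniteMeasure P] [NeZero m]

lemma IIDUniformDraws.measureReal_survives_inter_col (hU : IIDUniformDraws P U) (n : ℕ)
    (k : ZMod m) :
    P.real ({ω | Survives H y (fun i => U i ω) n} ∩ {ω | (U n ω).1 = k})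
      = (m : ℝ)⁻¹ * P.real {ω | Survives H y (fun i => U i ω) n} := by
  rw [measureReal_def, (Indep_iff _ _ _).1 (hU.indep_drawsBefore n) _ {ω | (U n ω).1 = k}
    (measurableSet_survives H y U n) ⟨{d | d.1 = k}, .of_discrete, rfl⟩,
    ENNReal.toReal_mul, ← measureReal_def, ← measureReal_def, hU.measureReal_col_eq, mul_comm]

lemma IIDUniformDraws.measureReal_survives_eq_add (hU : IIDUniformDraws P U) (n : ℕ) :
    P.real {ω | Survives H y (fun i => U i ω) n}
      = P.real {ω | AnnihilatedAt H y (fun i => U i ω) n}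
        + P.real {ω | Survives H y (fun i => U i ω) (n + 1)}
        + (m : ℝ)⁻¹ * P.real {ω | Survives H y (fun i => U i ω) n} := by
  have hle := drawsBefore_le U hU.1
  have hsplit : {ω | Survives H y (fun i => U i ω) n}
      = ({ω | AnnihilatedAt H y (fun i => U i ω) n}
          ∪ {ω | Survives H y (fun i => U i ω) (n + 1)})
        ∪ ({ω | Survives H y (fun i => U i ω) n} ∩ {ω | (U n ω).1 = 0}) := by
    ext ω
    exact survives_iff_or H y _ n
  conv_lhs => rw [hsplit]
  rw [← hU.measureReal_survives_inter_col H y n 0, measureReal_union, measureReal_union]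
  · exact Set.disjoint_left.2 fun ω ha hs => hs.not_annihilatedAt_of_succ H y _ ha
  · exact hle _ _ (measurableSet_survives H y U (n + 1))
  · refine Set.disjoint_left.2 fun ω h hz => ?_
    rcases h with ha | hs
    · exact ha.2.2 hz.2
    · exact hs.draw_ne_zero_of_succ H y _ hz.2
  · exact (hle _ _ (measurableSet_survives H y U n)).inter
      (hle _ _ (measurableSet_draw_fst_eq U n.lt_succ_self 0))

end Probability

end RandomHeap

theorem single_blocker_expected_stopping_time_general (m : ℕ)
    {Ω : Type*} [MeasurableSpace Ω] (P : Measure Ω) [IsProbabilityMeasure P]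
    (U : ℕ → Ω → ZMod m × Bool) (hU : IIDUniformDraws P U)
    (H : Finset (Piece m))
    (y : Piece m) (hy : SingleBlocker H y) :
    ∫ ω, ((1 + sInf {n : ℕ | y ∉ walk H (fun i => U i ω) (n + 1) ∨ (U n ω).1 = 0} : ℕ) : ℝ) ∂P
      = (1 - (P {ω | ∃ n : ℕ, y ∉ walk H (fun i => U i ω) n ∧
          ∀ t < n, (U t ω).1 ≠ 0}).toReal) * m := by
  have : NeZero m := ⟨hU.ne_zero⟩
  have hm : (0 : ℝ) < m := Nat.cast_pos.2 (Nat.pos_of_neZero m)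
  obtain ⟨hsummable, hmul⟩ := summable_and_mul_tsum_eq_of_eq_add (c := (m : ℝ)⁻¹)
    (inv_pos.2 hm) (fun _ => measureReal_nonneg) (fun _ => measureReal_nonneg)
    (hU.measureReal_survives_eq_add H y)
  have hsurv_zero : P.real {ω | Survives H y (fun i => U i ω) 0} = 1 := by
    simp [survives_zero]
  rw [hsurv_zero] at hmul
  refine (integral_one_add_sInf_stopsAt_eq_tsum H y hU.1 hsummable.tendsto_atTop_zero).trans ?_
  rw [← measureReal_def, measureReal_exists_notMem_walk_eq_tsum H y hU.1 hy.2.1, ← hmul]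
  field_simp

/-- For the signed random heap process with `m ≥ 4` columns, consider a
heap whose highest piece in column `0` is blocked by exactly one piece `y`, lying in
column `1`, and mark that blocking piece.  Let `P̃` be the probability that the marked
piece is annihilated before any piece falls in column `0`, and let `Ẽ` be the expected
number of steps until either the marked piece is annihilated or a piece falls in column
`0`.  Then `Ẽ = (1 - P̃) · m`. -/
theorem single_blocker_expected_stopping_time (m : ℕ) (hm : 4 ≤ m)
    {Ω : Type*} [MeasurableSpace Ω] (P : Measure Ω) [IsProbabilityMeasure P]
    (U : ℕ → Ω → ZMod m × Bool) (hU : IIDUniformDraws P U)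
    (H : Finset (Piece m)) (hH : IsHeap H)
    (y : Piece m) (hy : SingleBlocker H y) (hcol : y.col = 1) :
    ∫ ω, ((1 + sInf {n : ℕ | y ∉ walk H (fun i => U i ω) (n + 1) ∨ (U n ω).1 = 0} : ℕ) : ℝ) ∂P
      = (1 - (P {ω | ∃ n : ℕ, y ∉ walk H (fun i => U i ω) n ∧
          ∀ t < n, (U t ω).1 ≠ 0}).toReal) * m :=
  single_blocker_expected_stopping_time_general m P U hU H y hy
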